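/- Let R be an additively commutative semiring with 0 and 1, and let ∼ be a congruence relation on Mat_n(R). Then there exists a congruence relation ∼₀ on R such that for all A, B ∈ Mat_n(R): A ∼ B if and only if a_{ij} ∼₀ b_{ij} for all 1 ≤ i, j ≤ n. -/

import Mathlib

/-- A congruence relation on a semiring-like structure with addition and multiplication. -/
def IsSemiringCongruence {R : Type*} [Add R] [Mul R] (r : R → R → Prop) : Prop :=
  Equivalence r ∧
    (∀ a b c, r a b → r (a * c) (b * c)) ∧
    (∀ a b c, r a b → r (c * a) (c * b)) ∧
    (∀ a b c, r a b → r (a + c) (b + c)) ∧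
    (∀ a b c, r a b → r (c + a) (c + b))

/-!
With `E_kl(a)` the matrix having `a` at position `(k, l)` and zeros elsewhere, put
`a ∼₀ b` iff `E_kl(a) ∼ E_kl(b)` for all `k, l` (for `n > 0` this agrees with the `(1,1)` entry
alone, and for `n = 0` it needs no separate case). It is a congruence because
`E_ij(a) E_jj(c) = E_ij(ac)`, `E_ii(c) E_ij(a) = E_ij(ca)` and `E_ij` is additive.
If `A ∼ B` then `E_ki(1) A E_jl(1) = E_kl(a_ij)` shows `a_ij ∼₀ b_ij`; conversely
`A = ∑ E_ij(a_ij)` is congruent to `∑ E_ij(b_ij) = B` term by term.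
-/

open Matrix

namespace IsSemiringCongruence

variable {R : Type*}

section Basic

variable [Add R] [Mul R] {r : R → R → Prop}

theorem add (hr : IsSemiringCongruence r) {a b c d : R} (hab : r a b) (hcd : r c d) :
    r (a + c) (b + d) :=
  hr.1.trans (hr.2.2.2.1 _ _ _ hab) (hr.2.2.2.2 _ _ _ hcd)

theorem mul_mul (hr : IsSemiringCongruence r) {a b : R} (c d : R) (hab : r a b) :
    r (c * a * d) (c * b * d) :=
  hr.2.1 _ _ _ (hr.2.2.1 _ _ _ hab)

theorem iInf {ι : Sort*} {r : ι → R → R → Prop} (hr : ∀ i, IsSemiringCongruence (r i)) :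
    IsSemiringCongruence fun a b => ∀ i, r i a b :=
  ⟨⟨fun a i => (hr i).1.refl a, fun h i => (hr i).1.symm (h i),
      fun h h' i => (hr i).1.trans (h i) (h' i)⟩,
    fun _ _ c h i => (hr i).2.1 _ _ c (h i), fun _ _ c h i => (hr i).2.2.1 _ _ c (h i),
    fun _ _ c h i => (hr i).2.2.2.1 _ _ c (h i), fun _ _ c h i => (hr i).2.2.2.2 _ _ c (h i)⟩

end Basic

theorem sum [AddCommMonoid R] [Mul R] {r : R → R → Prop} (hr : IsSemiringCongruence r)
    {ι : Type*} (s : Finset ι) {f g : ι → R} (h : ∀ i, r (f i) (g i)) :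
    r (∑ i ∈ s, f i) (∑ i ∈ s, g i) :=
  Finset.sum_hom_rel (hr.1.refl 0) fun i _ _ => hr.add (h i)

variable {m : Type*} [Fintype m] [DecidableEq m] {rM : Matrix m m R → Matrix m m R → Prop}

theorem comap_single [NonUnitalNonAssocSemiring R] (hrM : IsSemiringCongruence rM) (i j : m) :
    IsSemiringCongruence fun a b => rM (single i j a) (single i j b) :=
  ⟨⟨fun _ => hrM.1.refl _, hrM.1.symm, hrM.1.trans⟩,
    fun _ _ c h => by simpa only [single_mul_single_same] using hrM.2.1 _ _ (single j j c) h,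
    fun _ _ c h => by simpa only [single_mul_single_same] using hrM.2.2.1 _ _ (single i i c) h,
    fun _ _ c h => by simpa only [single_add] using hrM.2.2.2.1 _ _ (single i j c) h,
    fun _ _ c h => by simpa only [single_add] using hrM.2.2.2.2 _ _ (single i j c) h⟩

theorem rel_iff_forall_single [Semiring R] (hrM : IsSemiringCongruence rM) (A B : Matrix m m R) :
    rM A B ↔ ∀ i j k l, rM (single k l (A i j)) (single k l (B i j)) := by
  refine ⟨fun h i j k l => ?_, fun h => ?_⟩
  · simpa only [single_mul_mul_single, one_mul, mul_one] using
      hrM.mul_mul (single k i 1) (single j l 1) h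
  · rw [matrix_eq_sum_single A, matrix_eq_sum_single B]
    exact hrM.sum _ fun i => hrM.sum _ fun j => h i j i j

end IsSemiringCongruence

theorem matrix_congruence_is_entrywise {R : Type*} [Semiring R] {n : ℕ}
    (rM : Matrix (Fin n) (Fin n) R → Matrix (Fin n) (Fin n) R → Prop)
    (hrM : IsSemiringCongruence rM) :
    ∃ r₀ : R → R → Prop, IsSemiringCongruence r₀ ∧
      ∀ A B : Matrix (Fin n) (Fin n) R, rM A B ↔ ∀ i j, r₀ (A i j) (B i j) :=
  ⟨fun a b => ∀ k l, rM (single k l a) (single k l b),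
    .iInf fun k => .iInf fun l => hrM.comap_single k l, hrM.rel_iff_forall_single⟩
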